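/- Let d be an (⊙,∨)-derivation on the standard MV-algebra I = [0,1]. Then for all x, y ∈ I one has the chain of inequalities d(x) ⊙ d(y) ≤ d(x ⊙ y) ≤ max(d(x), d(y)) ≤ d(x) ⊕ d(y). -/
import Mathlib


/-- Łukasiewicz strong conjunction `x ⊙ y = max 0 (x + y - 1)` on the unit interval. -/
noncomputable def od (x y : unitInterval) : unitInterval :=
  ⟨max 0 (x.1 + y.1 - 1),
    ⟨le_max_left _ _, max_le zero_le_one (by have := x.2.2; have := y.2.2; linarith)⟩⟩

/-- Łukasiewicz strong disjunction `x ⊕ y = min 1 (x + y)` on the unit interval. -/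
noncomputable def op (x y : unitInterval) : unitInterval :=
  ⟨min 1 (x.1 + y.1),
    ⟨le_min zero_le_one (by have := x.2.1; have := y.2.1; linarith), min_le_left _ _⟩⟩

/-- `d` is an `(⊙,∨)`-derivation on the standard MV-algebra `[0,1]`:
`d (x ⊙ y) = (d x ⊙ y) ∨ (x ⊙ d y)` for all `x, y`. -/
def IsOdotDer (d : unitInterval → unitInterval) : Prop :=
  ∀ x y : unitInterval, d (od x y) = max (od (d x) y) (od x (d y))

lemma od_val (x y : unitInterval) : (od x y).1 = max 0 (x.1 + y.1 - 1) := rfl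

lemma sup_val (a b : unitInterval) : (max a b).1 = max a.1 b.1 := by
  rcases le_total a b with h | h
  · rw [max_eq_right h, max_eq_right (Subtype.coe_le_coe.2 h)]
  · rw [max_eq_left h, max_eq_left (Subtype.coe_le_coe.2 h)]

lemma d_le (d : unitInterval → unitInterval) (hd : IsOdotDer d) (x : unitInterval) :
    (d x).1 ≤ x.1 := by
  have hd0 : d 0 = 0 := by
    have h2 := hd 0 0
    have e : od (0 : unitInterval) 0 = 0 := by
      apply Subtype.ext; rw [od_val]; norm_num
    rw [e] at h2
    have ha : (d (0 : unitInterval)).1 ≤ 1 := (d 0).2.2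
    have hv := congrArg Subtype.val h2
    rw [sup_val, od_val, od_val] at hv
    have hz : ((0 : unitInterval) : ℝ) = 0 := rfl
    rw [hz] at hv
    have hub : (d (0 : unitInterval)).1 ≤ 0 := by
      rw [hv]
      exact sup_le (sup_le le_rfl (by linarith)) (sup_le le_rfl (by linarith))
    exact Subtype.ext (le_antisymm hub (d 0).2.1)
  have h := hd x (unitInterval.symm x)
  have hs : (unitInterval.symm x).1 = 1 - x.1 := rfl
  have h0 : od x (unitInterval.symm x) = 0 := by
    apply Subtype.ext
    rw [od_val, hs]
    norm_num
  rw [h0, hd0] at h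
  have hv := congrArg Subtype.val h.symm
  rw [sup_val] at hv
  have hz : ((0 : unitInterval) : ℝ) = 0 := rfl
  have hle : (od (d x) (unitInterval.symm x)).1 ≤ 0 := by
    calc (od (d x) (unitInterval.symm x)).1 ≤ _ := le_sup_left
    _ = 0 := by rw [hv, hz]
  rw [od_val, hs] at hle
  have := le_max_right (0 : ℝ) ((d x).1 + (1 - x.1) - 1)
  linarith

/-- d x ⊙ d y ≤ d (x ⊙ y) ≤ d x ∨ d y ≤ d x ⊕ d y. -/
theorem stmt3 (d : unitInterval → unitInterval) (hd : IsOdotDer d) :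
    ∀ x y : unitInterval,
      od (d x) (d y) ≤ d (od x y) ∧
      d (od x y) ≤ max (d x) (d y) ∧
      max (d x) (d y) ≤ op (d x) (d y) := by
  intro x y
  have hx := d_le d hd x
  have hy := d_le d hd y
  have h := hd x y
  refine ⟨?_, ?_, ?_⟩
  · rw [h]
    refine le_trans ?_ (le_max_left (od (d x) y) (od x (d y)))
    show (od (d x) (d y)).1 ≤ (od (d x) y).1
    rw [od_val, od_val]
    exact max_le_max le_rfl (by linarith)
  · rw [h]
    apply max_le
    · refine le_trans ?_ (le_max_left (d x) (d y))
      show (od (d x) y).1 ≤ (d x).1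
      rw [od_val]
      exact max_le (d x).2.1 (by have := y.2.2; linarith)
    · refine le_trans ?_ (le_max_right (d x) (d y))
      show (od x (d y)).1 ≤ (d y).1
      rw [od_val]
      exact max_le (d y).2.1 (by have := x.2.2; linarith)
  · apply max_le
    · show (d x).1 ≤ min 1 ((d x).1 + (d y).1)
      exact le_min (d x).2.2 (by have := (d y).2.1; linarith)
    · show (d y).1 ≤ min 1 ((d x).1 + (d y).1)
      exact le_min (d y).2.2 (by have := (d x).2.1; linarith)
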